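/- arXiv:1611.02330 — 2 statements merged into one kernel-verified Lean document; each statement's English description precedes it below -/
import Mathlib

section
/- Let b, c, m : ℝ → ℝ be smooth, let u : ℝ² → ℝ be a smooth solution of the wave equation F[u] = 0, and let p, q : ℝ² → ℝ be smooth functions with L[u]p = 0 (p is a symmetry characteristic along u) and L*[u]q = 0 (q is an adjoint-symmetry along u) on ℝ². Then the current Ψᵗ = q·∂ₜp + (b(u)·q − ∂ₜq)·p, Ψˣ = −q·∂ₓp + (c(u)·q + ∂ₓq)·p is divergence-free: ∂ₜΨᵗ + ∂ₓΨˣ = 0 on ℝ². -/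
noncomputable section

open Real

/-- Partial derivative in the first (time) variable. -/
def Dt (u : ℝ → ℝ → ℝ) : ℝ → ℝ → ℝ := fun t x => deriv (fun s => u s x) t

/-- Partial derivative in the second (space) variable. -/
def Dx (u : ℝ → ℝ → ℝ) : ℝ → ℝ → ℝ := fun t x => deriv (fun s => u t s) x

/-- Smoothness (C^∞) of a function of two real variables. -/
def Smooth2 (u : ℝ → ℝ → ℝ) : Prop := ContDiff ℝ (⊤ : ℕ∞) (fun p : ℝ × ℝ => u p.1 p.2)
/-- The semilinear wave operator F[u] = ∂ₜ²u − ∂ₓ²u + b(u)∂ₜu + c(u)∂ₓu + m(u). -/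
def Fop (b c m : ℝ → ℝ) (u : ℝ → ℝ → ℝ) : ℝ → ℝ → ℝ := fun t x =>
  Dt (Dt u) t x - Dx (Dx u) t x + b (u t x) * Dt u t x + c (u t x) * Dx u t x + m (u t x)

/-- The adjoint linearized operator along u:
L*[u]q = ∂ₜ²q − ∂ₓ²q − b(u)∂ₜq − c(u)∂ₓq + m′(u)q. -/
def Lstar (b c m : ℝ → ℝ) (u q : ℝ → ℝ → ℝ) : ℝ → ℝ → ℝ := fun t x =>
  Dt (Dt q) t x - Dx (Dx q) t x - b (u t x) * Dt q t x - c (u t x) * Dx q t x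
    + deriv m (u t x) * q t x
/-- The linearized wave operator along u:
L[u]p = ∂ₜ²p − ∂ₓ²p + b(u)∂ₜp + c(u)∂ₓp + (b′(u)∂ₜu + c′(u)∂ₓu + m′(u))p. -/
def Lop (b c m : ℝ → ℝ) (u p : ℝ → ℝ → ℝ) : ℝ → ℝ → ℝ := fun t x =>
  Dt (Dt p) t x - Dx (Dx p) t x + b (u t x) * Dt p t x + c (u t x) * Dx p t x
    + (deriv b (u t x) * Dt u t x + deriv c (u t x) * Dx u t x + deriv m (u t x)) * p t x

/-
The current is the one produced by the Lagrange identity of the pair L, L*: a direct computation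
gives ∂ₜΨᵗ + ∂ₓΨˣ = q·L[u]p − p·L*[u]q for arbitrary differentiable data, and the right-hand side
vanishes when p is a symmetry and q an adjoint-symmetry.
-/

namespace Smooth2

variable {u : ℝ → ℝ → ℝ}

theorem hasDerivAt_fderiv_left (hu : Smooth2 u) (t x : ℝ) :
    HasDerivAt (fun s => u s x) (fderiv ℝ (fun p : ℝ × ℝ => u p.1 p.2) (t, x) (1, 0)) t := by
  exact (hu.differentiable (by simp) (t, x)).hasFDerivAt.comp_hasDerivAt t
    ((hasDerivAt_id' t).prodMk (hasDerivAt_const t x))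

theorem hasDerivAt_fderiv_right (hu : Smooth2 u) (t x : ℝ) :
    HasDerivAt (fun s => u t s) (fderiv ℝ (fun p : ℝ × ℝ => u p.1 p.2) (t, x) (0, 1)) x := by
  exact (hu.differentiable (by simp) (t, x)).hasFDerivAt.comp_hasDerivAt x
    ((hasDerivAt_const x t).prodMk (hasDerivAt_id' x))

theorem hasDerivAt_Dt (hu : Smooth2 u) (t x : ℝ) :
    HasDerivAt (fun s => u s x) (Dt u t x) t :=
  (hu.hasDerivAt_fderiv_left t x).differentiableAt.hasDerivAt

theorem hasDerivAt_Dx (hu : Smooth2 u) (t x : ℝ) :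
    HasDerivAt (fun s => u t s) (Dx u t x) x :=
  (hu.hasDerivAt_fderiv_right t x).differentiableAt.hasDerivAt

theorem dt (hu : Smooth2 u) : Smooth2 (Dt u) := by
  have h : (fun p : ℝ × ℝ => Dt u p.1 p.2)
      = fun p => fderiv ℝ (fun p : ℝ × ℝ => u p.1 p.2) p (1, 0) :=
    funext fun p => (hu.hasDerivAt_fderiv_left p.1 p.2).deriv
  rw [Smooth2, h]
  exact (hu.fderiv_right (by exact_mod_cast le_top)).clm_apply contDiff_const

theorem dx (hu : Smooth2 u) : Smooth2 (Dx u) := by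
  have h : (fun p : ℝ × ℝ => Dx u p.1 p.2)
      = fun p => fderiv ℝ (fun p : ℝ × ℝ => u p.1 p.2) p (0, 1) :=
    funext fun p => (hu.hasDerivAt_fderiv_right p.1 p.2).deriv
  rw [Smooth2, h]
  exact (hu.fderiv_right (by exact_mod_cast le_top)).clm_apply contDiff_const

end Smooth2

def symmetryCurrentT (b : ℝ → ℝ) (u p q : ℝ → ℝ → ℝ) : ℝ → ℝ → ℝ := fun t x =>
  q t x * Dt p t x + (b (u t x) * q t x - Dt q t x) * p t x

def symmetryCurrentX (c : ℝ → ℝ) (u p q : ℝ → ℝ → ℝ) : ℝ → ℝ → ℝ := fun t x =>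
  -(q t x) * Dx p t x + (c (u t x) * q t x + Dx q t x) * p t x

section Current

variable {b c : ℝ → ℝ} {u p q : ℝ → ℝ → ℝ}

theorem hasDerivAt_symmetryCurrentT (hb : Differentiable ℝ b) (hu : Smooth2 u)
    (hp : Smooth2 p) (hq : Smooth2 q) (t x : ℝ) :
    HasDerivAt (fun s => symmetryCurrentT b u p q s x)
      (Dt q t x * Dt p t x + q t x * Dt (Dt p) t x
        + ((deriv b (u t x) * Dt u t x * q t x + b (u t x) * Dt q t x - Dt (Dt q) t x) * p t x
          + (b (u t x) * q t x - Dt q t x) * Dt p t x)) t :=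
  ((hq.hasDerivAt_Dt t x).mul (hp.dt.hasDerivAt_Dt t x)).add
    ((((hb (u t x)).hasDerivAt.comp t (hu.hasDerivAt_Dt t x)).mul (hq.hasDerivAt_Dt t x)
      |>.sub (hq.dt.hasDerivAt_Dt t x)).mul (hp.hasDerivAt_Dt t x))

theorem hasDerivAt_symmetryCurrentX (hc : Differentiable ℝ c) (hu : Smooth2 u)
    (hp : Smooth2 p) (hq : Smooth2 q) (t x : ℝ) :
    HasDerivAt (fun s => symmetryCurrentX c u p q t s)
      (-(Dx q t x) * Dx p t x + -(q t x) * Dx (Dx p) t x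
        + ((deriv c (u t x) * Dx u t x * q t x + c (u t x) * Dx q t x + Dx (Dx q) t x) * p t x
          + (c (u t x) * q t x + Dx q t x) * Dx p t x)) x :=
  ((hq.hasDerivAt_Dx t x).neg.mul (hp.dx.hasDerivAt_Dx t x)).add
    ((((hc (u t x)).hasDerivAt.comp x (hu.hasDerivAt_Dx t x)).mul (hq.hasDerivAt_Dx t x)
      |>.add (hq.dx.hasDerivAt_Dx t x)).mul (hp.hasDerivAt_Dx t x))

theorem div_symmetryCurrent (m : ℝ → ℝ) (hb : Differentiable ℝ b) (hc : Differentiable ℝ c)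
    (hu : Smooth2 u) (hp : Smooth2 p) (hq : Smooth2 q) (t x : ℝ) :
    Dt (symmetryCurrentT b u p q) t x + Dx (symmetryCurrentX c u p q) t x
      = q t x * Lop b c m u p t x - p t x * Lstar b c m u q t x := by
  rw [Dt, Dx, (hasDerivAt_symmetryCurrentT hb hu hp hq t x).deriv,
    (hasDerivAt_symmetryCurrentX hc hu hp hq t x).deriv, Lop, Lstar]
  ring

end Current

theorem stmt_10_general
    (b c m : ℝ → ℝ)
    (hb : ContDiff ℝ (⊤ : ℕ∞) b) (hc : ContDiff ℝ (⊤ : ℕ∞) c)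
    (u : ℝ → ℝ → ℝ) (hu : Smooth2 u)
    (p q : ℝ → ℝ → ℝ) (hp : Smooth2 p) (hq : Smooth2 q)
    (hsymm : ∀ t x, Lop b c m u p t x = 0)
    (hadj : ∀ t x, Lstar b c m u q t x = 0) :
    ∀ t x : ℝ,
      Dt (fun t x => q t x * Dt p t x + (b (u t x) * q t x - Dt q t x) * p t x) t x
      + Dx (fun t x => -(q t x) * Dx p t x + (c (u t x) * q t x + Dx q t x) * p t x) t x
        = 0 := by
  intro t x
  have h := div_symmetryCurrent m (hb.differentiable (by simp)) (hc.differentiable (by simp))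
    hu hp hq t x
  rwa [hsymm, hadj, mul_zero, mul_zero, sub_zero] at h

/-- The symmetry/adjoint-symmetry conservation law formula: if p is a symmetry
characteristic and q an adjoint-symmetry along a solution u, the current
(Ψᵗ, Ψˣ) is divergence-free. -/
theorem stmt_10
    (b c m : ℝ → ℝ)
    (hb : ContDiff ℝ (⊤ : ℕ∞) b) (hc : ContDiff ℝ (⊤ : ℕ∞) c) (hm : ContDiff ℝ (⊤ : ℕ∞) m)
    (u : ℝ → ℝ → ℝ) (hu : Smooth2 u) (hsol : ∀ t x, Fop b c m u t x = 0)
    (p q : ℝ → ℝ → ℝ) (hp : Smooth2 p) (hq : Smooth2 q)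
    (hsymm : ∀ t x, Lop b c m u p t x = 0)
    (hadj : ∀ t x, Lstar b c m u q t x = 0) :
    ∀ t x : ℝ,
      Dt (fun t x => q t x * Dt p t x + (b (u t x) * q t x - Dt q t x) * p t x) t x
      + Dx (fun t x => -(q t x) * Dx p t x + (c (u t x) * q t x + Dx q t x) * p t x) t x
        = 0 :=
  stmt_10_general b c m hb hc u hu p q hp hq hsymm hadj
end
end

section
/- Let b, c : ℝ → ℝ be smooth, let m₁, m₂, m₃ ∈ ℝ satisfy m₁ = m₃² − m₂², define m(y) = m₁·y + m₂·B(y) + m₃·C(y), and set Q(t,x) = exp(m₂t + m₃x). Let u : ℝ² → ℝ be a smooth solution of F[u] = 0. Define the symmetry-generated current Ψᵗ = −Q·∂ₜ²u − (b(u) − m₂)·Q·∂ₜu, Ψˣ = Q·∂ₜ∂ₓu − (c(u) + m₃)·Q·∂ₜu, the multiplier current Ĉᵗ = Q·(∂ₜu − m₂·u + B(u)), Ĉˣ = Q·(m₃·u − ∂ₓu + C(u)), and θ = Q·(m₃·u + C(u) − ∂ₓu). Then Ψᵗ = m₂·Ĉᵗ + ∂ₓθ and Ψˣ = m₂·Ĉˣ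 − ∂ₜθ on ℝ². (Thus the current generated by the time-translation symmetry and the adjoint-symmetry Q is locally equivalent to m₂ times the conserved current determined by the multiplier Q.) -/
noncomputable section

open Real

/-! The potential θ = Q·(m₃u + C(u) − ∂ₓu) is differentiated by the product and chain rules
(C' = c, ∂ₜQ = m₂Q, ∂ₓQ = m₃Q). The identity for Ψˣ is then a ring identity valid for every
smooth u, while the two sides of the identity for Ψᵗ differ by exactly −Q·F[u] once
m₁ = m₃² − m₂² is substituted into m, so it holds on solutions. -/

section Smooth2

variable {u : ℝ → ℝ → ℝ}

theorem Smooth2.hasFDerivAt (hu : Smooth2 u) (p : ℝ × ℝ) :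
    HasFDerivAt (fun p : ℝ × ℝ => u p.1 p.2) (fderiv ℝ (fun p : ℝ × ℝ => u p.1 p.2) p) p :=
  (hu.differentiable (by simp) p).hasFDerivAt

theorem Smooth2.hasDerivAt_fderiv_t (hu : Smooth2 u) (t x : ℝ) :
    HasDerivAt (fun s => u s x) (fderiv ℝ (fun p : ℝ × ℝ => u p.1 p.2) (t, x) (1, 0)) t := by
  have hline : HasDerivAt (fun s : ℝ => (s, x)) ((1 : ℝ), (0 : ℝ)) t :=
    (hasDerivAt_id t).prodMk (hasDerivAt_const t x)
  exact (hu.hasFDerivAt (t, x)).comp_hasDerivAt t hline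

theorem Smooth2.hasDerivAt_fderiv_x (hu : Smooth2 u) (t x : ℝ) :
    HasDerivAt (fun s => u t s) (fderiv ℝ (fun p : ℝ × ℝ => u p.1 p.2) (t, x) (0, 1)) x := by
  have hline : HasDerivAt (fun s : ℝ => (t, s)) ((0 : ℝ), (1 : ℝ)) x :=
    (hasDerivAt_const x t).prodMk (hasDerivAt_id x)
  exact (hu.hasFDerivAt (t, x)).comp_hasDerivAt x hline

theorem Smooth2.hasDerivAt_Dt_s16 (hu : Smooth2 u) (t x : ℝ) :
    HasDerivAt (fun s => u s x) (Dt u t x) t :=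
  (hu.hasDerivAt_fderiv_t t x).differentiableAt.hasDerivAt

theorem Smooth2.hasDerivAt_Dx_s16 (hu : Smooth2 u) (t x : ℝ) :
    HasDerivAt (fun s => u t s) (Dx u t x) x :=
  (hu.hasDerivAt_fderiv_x t x).differentiableAt.hasDerivAt

theorem smooth2_Dx (hu : Smooth2 u) : Smooth2 (Dx u) := by
  have hDx : (fun p : ℝ × ℝ => Dx u p.1 p.2)
      = fun p => fderiv ℝ (fun p : ℝ × ℝ => u p.1 p.2) p (0, 1) :=
    funext fun p => (hu.hasDerivAt_fderiv_x p.1 p.2).deriv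
  rw [Smooth2, hDx]
  exact (hu.fderiv_right le_rfl).clm_apply contDiff_const

end Smooth2

section Potential

variable {m₂ m₃ : ℝ} {Q : ℝ → ℝ → ℝ} {C c : ℝ → ℝ} {u : ℝ → ℝ → ℝ}

theorem hasDerivAt_exp_affine_t (hQ : ∀ t x, Q t x = exp (m₂ * t + m₃ * x)) (t x : ℝ) :
    HasDerivAt (fun s => Q s x) (m₂ * Q t x) t := by
  simp only [hQ]
  exact (((hasDerivAt_id t).const_mul m₂).add_const (m₃ * x)).exp.congr_deriv (by simp [mul_comm])

theorem hasDerivAt_exp_affine_x (hQ : ∀ t x, Q t x = exp (m₂ * t + m₃ * x)) (t x : ℝ) :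
    HasDerivAt (fun s => Q t s) (m₃ * Q t x) x := by
  simp only [hQ]
  exact (((hasDerivAt_id x).const_mul m₃).const_add (m₂ * t)).exp.congr_deriv (by simp [mul_comm])

theorem Dt_potential (hQ : ∀ t x, Q t x = exp (m₂ * t + m₃ * x))
    (hC : ∀ y, HasDerivAt C (c y) y) (hu : Smooth2 u) (t x : ℝ) :
    Dt (fun t x => Q t x * (m₃ * u t x + C (u t x) - Dx u t x)) t x
      = m₂ * Q t x * (m₃ * u t x + C (u t x) - Dx u t x)
        + Q t x * (m₃ * Dt u t x + c (u t x) * Dt u t x - Dt (Dx u) t x) := by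
  have hut := hu.hasDerivAt_Dt_s16 t x
  exact ((hasDerivAt_exp_affine_t hQ t x).mul (((hut.const_mul m₃).add
    ((hC (u t x)).comp t hut)).sub ((smooth2_Dx hu).hasDerivAt_Dt_s16 t x))).deriv

theorem Dx_potential (hQ : ∀ t x, Q t x = exp (m₂ * t + m₃ * x))
    (hC : ∀ y, HasDerivAt C (c y) y) (hu : Smooth2 u) (t x : ℝ) :
    Dx (fun t x => Q t x * (m₃ * u t x + C (u t x) - Dx u t x)) t x
      = m₃ * Q t x * (m₃ * u t x + C (u t x) - Dx u t x)
        + Q t x * (m₃ * Dx u t x + c (u t x) * Dx u t x - Dx (Dx u) t x) := by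
  have hux := hu.hasDerivAt_Dx_s16 t x
  exact ((hasDerivAt_exp_affine_x hQ t x).mul (((hux.const_mul m₃).add
    ((hC (u t x)).comp x hux)).sub ((smooth2_Dx hu).hasDerivAt_Dx_s16 t x))).deriv

end Potential

theorem stmt_16_general
    (b c : ℝ → ℝ) (hc : ContDiff ℝ (⊤ : ℕ∞) c)
    (m₁ m₂ m₃ : ℝ) (hm₁ : m₁ = m₃ ^ 2 - m₂ ^ 2)
    (m B C : ℝ → ℝ)
    (hC : ∀ y, C y = ∫ s in (0:ℝ)..y, c s)
    (hmdef : ∀ y, m y = m₁ * y + m₂ * B y + m₃ * C y)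
    (Q : ℝ → ℝ → ℝ) (hQdef : ∀ t x, Q t x = Real.exp (m₂ * t + m₃ * x))
    (u : ℝ → ℝ → ℝ) (hu : Smooth2 u) (hsol : ∀ t x, Fop b c m u t x = 0) :
    (∀ t x : ℝ,
      -(Q t x) * Dt (Dt u) t x - (b (u t x) - m₂) * Q t x * Dt u t x
        = m₂ * (Q t x * (Dt u t x - m₂ * u t x + B (u t x)))
          + Dx (fun t x => Q t x * (m₃ * u t x + C (u t x) - Dx u t x)) t x)
    ∧ (∀ t x : ℝ,
      Q t x * Dt (Dx u) t x - (c (u t x) + m₃) * Q t x * Dt u t x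
        = m₂ * (Q t x * (m₃ * u t x - Dx u t x + C (u t x)))
          - Dt (fun t x => Q t x * (m₃ * u t x + C (u t x) - Dx u t x)) t x) := by
  have hCderiv : ∀ y, HasDerivAt C (c y) y := fun y => by
    rw [show C = fun z => ∫ s in (0:ℝ)..z, c s from funext hC]
    exact (hc.continuous.integral_hasStrictDerivAt 0 y).hasDerivAt
  refine ⟨fun t x => ?_, fun t x => ?_⟩
  · have hF := hsol t x
    simp only [Fop, hmdef, hm₁] at hF
    rw [Dx_potential hQdef hCderiv hu]
    linear_combination (-Q t x) * hF
  · rw [Dt_potential hQdef hCderiv hu]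
    ring

/-- On solutions, the current generated by the time-translation symmetry and
the adjoint-symmetry Q = exp(m₂t + m₃x) is locally equivalent to m₂ times the
conserved current determined by the multiplier Q. -/
theorem stmt_16
    (b c : ℝ → ℝ) (hb : ContDiff ℝ (⊤ : ℕ∞) b) (hc : ContDiff ℝ (⊤ : ℕ∞) c)
    (m₁ m₂ m₃ : ℝ) (hm₁ : m₁ = m₃ ^ 2 - m₂ ^ 2)
    (m B C : ℝ → ℝ)
    (hB : ∀ y, B y = ∫ s in (0:ℝ)..y, b s)
    (hC : ∀ y, C y = ∫ s in (0:ℝ)..y, c s)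
    (hmdef : ∀ y, m y = m₁ * y + m₂ * B y + m₃ * C y)
    (Q : ℝ → ℝ → ℝ) (hQdef : ∀ t x, Q t x = Real.exp (m₂ * t + m₃ * x))
    (u : ℝ → ℝ → ℝ) (hu : Smooth2 u) (hsol : ∀ t x, Fop b c m u t x = 0) :
    (∀ t x : ℝ,
      -(Q t x) * Dt (Dt u) t x - (b (u t x) - m₂) * Q t x * Dt u t x
        = m₂ * (Q t x * (Dt u t x - m₂ * u t x + B (u t x)))
          + Dx (fun t x => Q t x * (m₃ * u t x + C (u t x) - Dx u t x)) t x)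
    ∧ (∀ t x : ℝ,
      Q t x * Dt (Dx u) t x - (c (u t x) + m₃) * Q t x * Dt u t x
        = m₂ * (Q t x * (m₃ * u t x - Dx u t x + C (u t x)))
          - Dt (fun t x => Q t x * (m₃ * u t x + C (u t x) - Dx u t x)) t x) :=
  stmt_16_general b c hc m₁ m₂ m₃ hm₁ m B C hC hmdef Q hQdef u hu hsol
end
end
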